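/- On R^4 with coordinates (x,y,z,v), the bivector P with components P^{xy} = 2x²y, P^{xz} = 2yz², P^{xv} = 2xyz + 2yzv, P^{yz} = -2xyz + 2yzv, P^{yv} = 2yv², P^{zv} = 2yz² is a Poisson bivector: [[P,P]] = 0. -/

import Mathlib

/-! The entries of `Pb` are polynomials, and for polynomials `∂_l` is the formal derivative
`MvPolynomial.pderiv l` followed by evaluation. The Jacobi identity is therefore the evaluation
of an identity in `ℝ[x, y, z, v]`, which is checked by expanding. -/

open scoped BigOperators

/-- Partial derivative `∂_k f` of a scalar function on `ℝ^r`. -/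
noncomputable def pd {r : ℕ} (k : Fin r) (f : (Fin r → ℝ) → ℝ) : (Fin r → ℝ) → ℝ :=
  fun x => fderiv ℝ f x (Pi.single k 1)

/-- Components of the Schouten bracket (Lie derivative) `[[V,P]]` of a vector field `V`
with a bivector `P`. -/
noncomputable def lieD {r : ℕ} (V : Fin r → (Fin r → ℝ) → ℝ)
    (P : Fin r → Fin r → (Fin r → ℝ) → ℝ) (i j : Fin r) (x : Fin r → ℝ) : ℝ :=
  ∑ k, (V k x * pd k (P i j) x - P k j x * pd k (V i) x - P i k x * pd k (V j) x)

/-- The cubic Poisson bivector on `ℝ^4 ≅ gl(2,ℝ)` associated with the `R`-matrix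
`((x,y),(z,v)) ↦ ((x,y),(-z,v))`; coordinates `(x,y,z,v) = (w 0, w 1, w 2, w 3)`. -/
noncomputable def Pb : Fin 4 → Fin 4 → (Fin 4 → ℝ) → ℝ := fun i j w =>
  let x := w 0; let y := w 1; let z := w 2; let v := w 3
  !![0,                      2*x^2*y,                 2*y*z^2,           2*x*y*z + 2*y*z*v;
     -(2*x^2*y),             0,                       -2*x*y*z + 2*y*z*v, 2*y*v^2;
     -(2*y*z^2),             -(-2*x*y*z + 2*y*z*v),   0,                 2*y*z^2;
     -(2*x*y*z + 2*y*z*v),   -(2*y*v^2),              -(2*y*z^2),        0] i j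

open MvPolynomial

theorem MvPolynomial.hasFDerivAt_eval {σ : Type*} [Fintype σ] (p : MvPolynomial σ ℝ)
    (x : σ → ℝ) :
    HasFDerivAt (fun y : σ → ℝ => eval y p)
      (∑ k, eval x (pderiv k p) • ContinuousLinearMap.proj (R := ℝ) (φ := fun _ : σ => ℝ) k) x := by
  induction p using MvPolynomial.induction_on with
  | C a => simpa using hasFDerivAt_const a x
  | add p q hp hq =>
    simp only [map_add, add_smul, Finset.sum_add_distrib]
    exact hp.fun_add hq
  | mul_X p i hp =>
    classical
    simp only [map_mul, eval_X]
    refine (hp.fun_mul (hasFDerivAt_apply i x)).congr_fderiv ?_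
    ext v
    simp [pderiv_X, Pi.single_apply, apply_ite (eval x), ite_mul, add_mul, Finset.sum_add_distrib,
      Finset.mul_sum, mul_assoc]

theorem pd_eval {r : ℕ} (k : Fin r) (p : MvPolynomial (Fin r) ℝ) (x : Fin r → ℝ) :
    pd k (fun y => eval y p) x = eval x (pderiv k p) := by
  classical
  simp [pd, (hasFDerivAt_eval p x).fderiv, Pi.single_apply]

noncomputable def cubicBivector : Matrix (Fin 4) (Fin 4) (MvPolynomial (Fin 4) ℝ) :=
  let x := X 0; let y := X 1; let z := X 2; let v := X 3
  !![0,                      2*x^2*y,                 2*y*z^2,           2*x*y*z + 2*y*z*v;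
     -(2*x^2*y),             0,                       -2*x*y*z + 2*y*z*v, 2*y*v^2;
     -(2*y*z^2),             -(-2*x*y*z + 2*y*z*v),   0,                 2*y*z^2;
     -(2*x*y*z + 2*y*z*v),   -(2*y*v^2),              -(2*y*z^2),        0]

theorem Pb_eq_eval_cubicBivector (i j : Fin 4) : Pb i j = fun w => eval w (cubicBivector i j) := by
  funext w
  fin_cases i <;> fin_cases j <;> simp [Pb, cubicBivector]

set_option maxHeartbeats 1000000 in
theorem cubicBivector_jacobi (i j k : Fin 4) :
    ∑ l, (cubicBivector l i * pderiv l (cubicBivector j k)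
      + cubicBivector l j * pderiv l (cubicBivector k i)
      + cubicBivector l k * pderiv l (cubicBivector i j)) = 0 := by
  fin_cases i <;> fin_cases j <;> fin_cases k <;>
    simp [cubicBivector, Fin.sum_univ_four, Derivation.leibniz, Derivation.leibniz_pow, pderiv_X,
      Pi.single_apply] <;> ring

/-- the bivector `Pb` is Poisson: `[[Pb,Pb]] = 0`. -/
theorem statement7 :
    ∀ (i j k : Fin 4) (x : Fin 4 → ℝ),
      ∑ l, (Pb l i x * pd l (Pb j k) x + Pb l j x * pd l (Pb k i) x
             + Pb l k x * pd l (Pb i j) x) = 0 := by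
  intro i j k x
  simpa only [Pb_eq_eval_cubicBivector, pd_eval, map_sum, map_add, map_mul, map_zero]
    using congrArg (eval x) (cubicBivector_jacobi i j k)
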